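/- arXiv:1403.0287 — 2 statements merged into one kernel-verified Lean document; each statement's English description precedes it below -/
import Mathlib

section
/- Let Ŵ be a three times continuously differentiable real-valued function on a neighborhood of the identity in the space of 3×3 real matrices, set W(F) = Ŵ(FᵀF), assume W_F(I) = 0, and let L0 = W_FF(I). Fix M > 0. Then there exists a constant C > 0 such that for all λ ∈ (0, 1], all 3×3 matrices F with |F − I| ≤ M λ, all symmetric 3×3 matrices e with |e| ≤ M and |FᵀF − I − 2λ e| ≤ M λ², and all 3×3 matrices ξ, one has |(W_FF(F)ξ, ξ) − (L0 ξ_sym, ξ_sym) − λ (σ, ξᵀξ)| ≤ C (λ |ξ_sym| |ξ| + λ² |ξ|²), where σ = L0 e. -/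
/-!
Write `W = Ŵ ∘ q` with `q X = XᵀX`. The chain rule gives
`W_FF(F)[ξ, ξ] = D²Ŵ(FᵀF)[Dq_F ξ, Dq_F ξ] + 2 DŴ(FᵀF)[ξᵀξ]`, where `Dq_F ξ = Fᵀξ + ξᵀF` equals
`2 ξ_sym` up to an error of size `|F - I| |ξ|`. Since `W_F(I) = 0`, `DŴ(I)` vanishes on symmetric
matrices, so `(L0 a, b) = 4 D²Ŵ(I)[a, b]` for symmetric `a, b`. Hence the quantity to estimate is
`D²Ŵ(FᵀF)[Dq_F ξ, Dq_F ξ] - D²Ŵ(I)[2ξ_sym, 2ξ_sym]` plus twice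
`DŴ(FᵀF)[ξᵀξ] - D²Ŵ(I)[2λe, ξᵀξ]`. A bound on `D²Ŵ` and `D³Ŵ` near `I` makes `D²Ŵ` Lipschitz and
the first-order Taylor remainder of `DŴ` at `I` quadratic, and `FᵀF - I = 2λe + O(λ²)`.
-/

noncomputable section
open Matrix

abbrev Mat3 := Matrix (Fin 3) (Fin 3) ℝ

attribute [local instance] Matrix.frobeniusNormedAddCommGroup Matrix.frobeniusNormedSpace

/-- Frobenius inner product (A,B) = Tr(A Bᵀ). -/
def frob (A B : Mat3) : ℝ := (A * Bᵀ).trace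

/-- Frobenius norm. -/
noncomputable def frobNorm (A : Mat3) : ℝ := Real.sqrt (frob A A)

/-- Symmetric part ξ_sym = (ξ + ξᵀ)/2. -/
def symPart (A : Mat3) : Mat3 := (2⁻¹ : ℝ) • (A + Aᵀ)

open Metric

section Calculus

variable {E G H : Type*} [NormedAddCommGroup E] [NormedSpace ℝ E]
  [NormedAddCommGroup G] [NormedSpace ℝ G] [NormedAddCommGroup H] [NormedSpace ℝ H]

theorem hasFDerivAt_apply_self (B : E →L[ℝ] E →L[ℝ] G) (x : E) :
    HasFDerivAt (fun y => B y y) (B x + B.flip x) x := by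
  refine (B.hasFDerivAt_of_bilinear (hasFDerivAt_id x) (hasFDerivAt_id x)).congr_fderiv ?_
  ext ξ
  simp

theorem fderiv_comp_apply_self (B : E →L[ℝ] E →L[ℝ] G) {f : G → H} {x : E}
    (hf : DifferentiableAt ℝ f (B x x)) :
    fderiv ℝ (fun y => f (B y y)) x = (fderiv ℝ f (B x x)).comp (B x + B.flip x) :=
  (hf.hasFDerivAt.comp (f := fun y => B y y) x (hasFDerivAt_apply_self B x)).fderiv

theorem iteratedFDeriv_two_comp_apply_self (B : E →L[ℝ] E →L[ℝ] G) {f : G → H}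
    (hf : ContDiff ℝ 2 f) (x ξ η : E) :
    iteratedFDeriv ℝ 2 (fun y => f (B y y)) x ![ξ, η]
      = fderiv ℝ (fderiv ℝ f) (B x x) (B x ξ + B ξ x) (B x η + B η x)
        + fderiv ℝ f (B x x) (B ξ η + B η ξ) := by
  have hf₂ : Differentiable ℝ (fderiv ℝ f) :=
    (hf.fderiv_right (m := 1) (by norm_num)).differentiable (by norm_num)
  have hD : fderiv ℝ (fun y => f (B y y)) = fun y => (fderiv ℝ f (B y y)).comp ((B + B.flip) y) :=
    funext fun y => fderiv_comp_apply_self B ((hf.differentiable (by norm_num)) _)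
  have hD₂ : HasFDerivAt (fun y => (fderiv ℝ f (B y y)).comp ((B + B.flip) y)) _ x :=
    ((hf₂ _).hasFDerivAt.comp x (hasFDerivAt_apply_self B x)).clm_comp (B + B.flip).hasFDerivAt
  rw [iteratedFDeriv_two_apply, hD, hD₂.fderiv]
  simp [add_comm]

theorem norm_image_sub_sub_fderiv_le {g : E → G} {a x : E} {K : ℝ} (hK : 0 ≤ K)
    (hg : ∀ y ∈ closedBall a ‖x - a‖, DifferentiableAt ℝ g y)
    (hg' : ∀ y ∈ closedBall a ‖x - a‖, ‖fderiv ℝ g y - fderiv ℝ g a‖ ≤ K * ‖y - a‖) :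
    ‖g x - g a - fderiv ℝ g a (x - a)‖ ≤ K * ‖x - a‖ ^ 2 := by
  have hbound : ∀ y ∈ closedBall a ‖x - a‖, ‖fderiv ℝ g y - fderiv ℝ g a‖ ≤ K * ‖x - a‖ :=
    fun y hy => (hg' y hy).trans (mul_le_mul_of_nonneg_left (mem_closedBall_iff_norm.mp hy) hK)
  have := (convex_closedBall a ‖x - a‖).norm_image_sub_le_of_norm_fderiv_le' hg hbound
    (mem_closedBall_self (norm_nonneg _)) (mem_closedBall_iff_norm.mpr le_rfl)
  linarith

theorem exists_second_order_taylor_bounds [ProperSpace E] {f : E → H} (hf : ContDiff ℝ 3 f)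
    (a : E) (r : ℝ) :
    ∃ K, 0 ≤ K ∧ ∀ x ∈ closedBall a r,
      ‖fderiv ℝ (fderiv ℝ f) x‖ ≤ K ∧
      ‖fderiv ℝ (fderiv ℝ f) x - fderiv ℝ (fderiv ℝ f) a‖ ≤ K * ‖x - a‖ ∧
      ‖fderiv ℝ f x - fderiv ℝ f a - fderiv ℝ (fderiv ℝ f) a (x - a)‖ ≤ K * ‖x - a‖ ^ 2 := by
  have hf2 : ContDiff ℝ 2 (fderiv ℝ f) := hf.fderiv_right (by norm_num)
  have hf3 : ContDiff ℝ 1 (fderiv ℝ (fderiv ℝ f)) := hf2.fderiv_right (by norm_num)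
  obtain ⟨K₂, hK₂⟩ := (isCompact_closedBall a r).exists_bound_of_continuousOn
    (hf2.continuous_fderiv (by norm_num)).continuousOn
  obtain ⟨K₃, hK₃⟩ := (isCompact_closedBall a r).exists_bound_of_continuousOn
    (hf3.continuous_fderiv (by norm_num)).continuousOn
  set K := max (max K₂ K₃) 0
  have hK : 0 ≤ K := le_max_right _ _
  have hLip : ∀ x ∈ closedBall a r,
      ‖fderiv ℝ (fderiv ℝ f) x - fderiv ℝ (fderiv ℝ f) a‖ ≤ K * ‖x - a‖ := fun x hx =>
    (convex_closedBall a r).norm_image_sub_le_of_norm_fderiv_le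
      (fun y _ => (hf3.differentiable one_ne_zero).differentiableAt)
      (fun y hy => (hK₃ y hy).trans ((le_max_right _ _).trans (le_max_left _ _)))
      (mem_closedBall_self (dist_nonneg.trans hx)) hx
  refine ⟨K, hK, fun x hx => ⟨(hK₂ x hx).trans ((le_max_left _ _).trans (le_max_left _ _)),
    hLip x hx, norm_image_sub_sub_fderiv_le hK
      (fun y _ => (hf2.differentiable (by norm_num)).differentiableAt) fun y hy => hLip y ?_⟩⟩
  exact closedBall_subset_closedBall (mem_closedBall_iff_norm.mp hx) hy

theorem abs_apply_apply_le (A : E →L[ℝ] E →L[ℝ] ℝ) (u v : E) : |A u v| ≤ ‖A‖ * ‖u‖ * ‖v‖ := by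
  simpa only [Real.norm_eq_abs] using A.le_opNorm₂ u v

theorem abs_apply_add_add_sub_le (A A₀ : E →L[ℝ] E →L[ℝ] ℝ) (u v : E) :
    |A (u + v) (u + v) - A₀ u u|
      ≤ ‖A - A₀‖ * ‖u‖ ^ 2 + 2 * ‖A‖ * ‖u‖ * ‖v‖ + ‖A‖ * ‖v‖ ^ 2 := by
  have h : A (u + v) (u + v) - A₀ u u = (A - A₀) u u + (A u v + A v u) + A v v := by
    simp only [map_add, _root_.add_apply, _root_.sub_apply]; ring
  have h₁ := abs_apply_apply_le (A - A₀) u u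
  have h₂ := abs_apply_apply_le A u v
  have h₃ := abs_apply_apply_le A v u
  have h₄ := abs_apply_apply_le A v v
  rw [h]
  refine (abs_add_three _ _ _).trans ?_
  nlinarith [abs_add_le (A u v) (A v u)]

theorem abs_apply_sub_apply_apply_le_of_apply_eq_zero (g g₀ : E →L[ℝ] ℝ) (A₀ : E →L[ℝ] E →L[ℝ] ℝ)
    {z : E} (hz : g₀ z = 0) (c d : E) :
    |g z - A₀ d z| ≤ (‖g - g₀ - A₀ c‖ + ‖A₀‖ * ‖c - d‖) * ‖z‖ := by
  have h : g z - A₀ d z = (g - g₀ - A₀ c) z + A₀ (c - d) z := by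
    simp only [map_sub, _root_.sub_apply, hz]; ring
  rw [h, add_mul]
  refine (abs_add_le _ _).trans (add_le_add ?_ ?_)
  · simpa only [Real.norm_eq_abs] using (g - g₀ - A₀ c).le_opNorm z
  · exact abs_apply_apply_le A₀ _ _

end Calculus

/- The Frobenius norm induces the product topology of `Matrix`, but not reducibly; preferring the
normed one keeps `fderiv` and `ContDiff` statements about matrices syntactically compatible. -/
abbrev frobeniusTopology {m n : Type*} [Fintype m] [Fintype n] : TopologicalSpace (Matrix m n ℝ) :=
  PseudoMetricSpace.toUniformSpace.toTopologicalSpace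

section MatrixCalculus

attribute [local instance high] frobeniusTopology

variable {m n H : Type*} [Fintype m] [Fintype n] [NormedAddCommGroup H] [NormedSpace ℝ H]

theorem norm_transpose_mul_le (X Y : Matrix m n ℝ) : ‖Xᵀ * Y‖ ≤ ‖X‖ * ‖Y‖ := by
  simpa only [frobenius_norm_transpose] using frobenius_norm_mul Xᵀ Y

theorem isBoundedBilinearMap_transpose_mul :
    IsBoundedBilinearMap ℝ fun p : Matrix m n ℝ × Matrix m n ℝ => p.1ᵀ * p.2 :=
  (((mulLinearMap ℝ : Matrix n m ℝ →ₗ[ℝ] _ →ₗ[ℝ] Matrix n n ℝ) ∘ₗ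
    (transposeLinearEquiv m n ℝ ℝ).toLinearMap).mkContinuous₂ 1
    fun X Y => by simpa using norm_transpose_mul_le X Y).isBoundedBilinearMap

theorem fderiv_comp_transpose_mul_self {f : Matrix n n ℝ → H} {F : Matrix m n ℝ}
    (hf : DifferentiableAt ℝ f (Fᵀ * F)) (ξ : Matrix m n ℝ) :
    fderiv ℝ (fun X => f (Xᵀ * X)) F ξ = fderiv ℝ f (Fᵀ * F) (Fᵀ * ξ + ξᵀ * F) := by
  simpa [-map_add] using
    congr($(fderiv_comp_apply_self isBoundedBilinearMap_transpose_mul.toContinuousLinearMap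
      (x := F) (by simpa using hf)) ξ)

theorem iteratedFDeriv_two_comp_transpose_mul_self {f : Matrix n n ℝ → H} (hf : ContDiff ℝ 2 f)
    (F ξ η : Matrix m n ℝ) :
    iteratedFDeriv ℝ 2 (fun X => f (Xᵀ * X)) F ![ξ, η]
      = fderiv ℝ (fderiv ℝ f) (Fᵀ * F) (Fᵀ * ξ + ξᵀ * F) (Fᵀ * η + ηᵀ * F)
        + fderiv ℝ f (Fᵀ * F) (ξᵀ * η + ηᵀ * ξ) := by
  simpa [-map_add] using iteratedFDeriv_two_comp_apply_self
    isBoundedBilinearMap_transpose_mul.toContinuousLinearMap hf F ξ η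

theorem norm_transpose_mul_add_transpose_mul_le (G ξ : Matrix m n ℝ) :
    ‖Gᵀ * ξ + ξᵀ * G‖ ≤ 2 * ‖G‖ * ‖ξ‖ := by
  have h₁ := norm_transpose_mul_le G ξ
  have h₂ := norm_transpose_mul_le ξ G
  linarith [norm_add_le (Gᵀ * ξ) (ξᵀ * G)]

variable [DecidableEq n]

theorem fderiv_apply_eq_zero_of_isSymm {f : Matrix n n ℝ → H} (hf : DifferentiableAt ℝ f 1)
    (h₀ : fderiv ℝ (fun X => f (Xᵀ * X)) 1 = 0) {u : Matrix n n ℝ} (hu : u.IsSymm) :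
    fderiv ℝ f 1 u = 0 := by
  have h := fderiv_comp_transpose_mul_self (F := 1) (by simpa using hf) ((2 : ℝ)⁻¹ • u)
  simp only [transpose_one, one_mul, mul_one, transpose_smul, hu.eq, h₀, ← add_smul] at h
  norm_num at h
  exact h.symm

theorem iteratedFDeriv_two_comp_transpose_mul_self_one {f : Matrix n n ℝ → H}
    (hf : ContDiff ℝ 2 f) (h₀ : ∀ u : Matrix n n ℝ, u.IsSymm → fderiv ℝ f 1 u = 0)
    {u v : Matrix n n ℝ} (hu : u.IsSymm) (hv : v.IsSymm) :
    iteratedFDeriv ℝ 2 (fun X => f (Xᵀ * X)) 1 ![u, v] = (4 : ℝ) • fderiv ℝ (fderiv ℝ f) 1 u v := by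
  have huv : (u * v + v * u).IsSymm := by
    simp only [IsSymm, transpose_add, transpose_mul, hu.eq, hv.eq, add_comm]
  simp only [iteratedFDeriv_two_comp_transpose_mul_self hf, transpose_one, one_mul, mul_one,
    hu.eq, hv.eq, h₀ _ huv, add_zero, ← two_smul ℝ u, ← two_smul ℝ v, map_smul,
    _root_.smul_apply, smul_smul]
  norm_num

theorem frobNorm_eq_norm (A : Mat3) : frobNorm A = ‖A‖ := by
  rw [frobNorm, frobenius_norm_def, Real.sqrt_eq_rpow]
  congr 1
  simp [frob, trace, mul_apply, sq]

theorem isSymm_symPart (A : Mat3) : (symPart A).IsSymm :=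
  (isSymm_add_transpose_self A).smul _

theorem norm_symPart_le (A : Mat3) : ‖symPart A‖ ≤ ‖A‖ :=
  calc ‖symPart A‖ = 2⁻¹ * ‖A + Aᵀ‖ := by rw [symPart, norm_smul]; norm_num
    _ ≤ 2⁻¹ * (‖A‖ + ‖Aᵀ‖) := by gcongr; exact norm_add_le _ _
    _ = ‖A‖ := by rw [frobenius_norm_transpose]; ring

theorem transpose_mul_add_transpose_mul_eq (F ξ : Mat3) :
    Fᵀ * ξ + ξᵀ * F = (2 : ℝ) • symPart ξ + ((F - 1)ᵀ * ξ + ξᵀ * (F - 1)) := by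
  rw [symPart, smul_smul, mul_inv_cancel₀ two_ne_zero, one_smul]
  simp only [transpose_sub, transpose_one, Matrix.sub_mul, Matrix.mul_sub, one_mul, mul_one]
  abel

theorem second_variation_sub_eq {f : Mat3 → ℝ} (hf : ContDiff ℝ 2 f)
    (h₀ : ∀ u : Mat3, u.IsSymm → fderiv ℝ f 1 u = 0) (lam : ℝ) (F : Mat3) {e : Mat3}
    (he : e.IsSymm) (ξ : Mat3) :
    iteratedFDeriv ℝ 2 (fun X => f (Xᵀ * X)) F ![ξ, ξ]
        - iteratedFDeriv ℝ 2 (fun X => f (Xᵀ * X)) 1 ![symPart ξ, symPart ξ]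
        - lam * iteratedFDeriv ℝ 2 (fun X => f (Xᵀ * X)) 1 ![e, ξᵀ * ξ]
      = (fderiv ℝ (fderiv ℝ f) (Fᵀ * F) ((2 : ℝ) • symPart ξ + ((F - 1)ᵀ * ξ + ξᵀ * (F - 1)))
            ((2 : ℝ) • symPart ξ + ((F - 1)ᵀ * ξ + ξᵀ * (F - 1)))
          - fderiv ℝ (fderiv ℝ f) 1 ((2 : ℝ) • symPart ξ) ((2 : ℝ) • symPart ξ))
        + 2 * (fderiv ℝ f (Fᵀ * F) (ξᵀ * ξ)
          - fderiv ℝ (fderiv ℝ f) 1 ((2 * lam) • e) (ξᵀ * ξ)) := by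
  rw [iteratedFDeriv_two_comp_transpose_mul_self_one hf h₀ (isSymm_symPart ξ) (isSymm_symPart ξ),
    iteratedFDeriv_two_comp_transpose_mul_self_one hf h₀ he (isSymm_transpose_mul_self ξ),
    iteratedFDeriv_two_comp_transpose_mul_self hf, transpose_mul_add_transpose_mul_eq]
  simp only [map_add, map_smul, _root_.add_apply, _root_.smul_apply, smul_eq_mul]
  ring

theorem abs_second_variation_sub_le {f : Mat3 → ℝ} (hf : ContDiff ℝ 2 f)
    (h₀ : ∀ u : Mat3, u.IsSymm → fderiv ℝ f 1 u = 0) {K M lam : ℝ} (hK : 0 ≤ K) (hM : 0 < M)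
    (hlam : 0 < lam) {F e : Mat3} (he : e.IsSymm) (ξ : Mat3)
    (hA : ‖fderiv ℝ (fderiv ℝ f) (Fᵀ * F)‖ ≤ K) (hA₀ : ‖fderiv ℝ (fderiv ℝ f) 1‖ ≤ K)
    (hAA₀ : ‖fderiv ℝ (fderiv ℝ f) (Fᵀ * F) - fderiv ℝ (fderiv ℝ f) 1‖ ≤ K * (3 * M * lam))
    (hg : ‖fderiv ℝ f (Fᵀ * F) - fderiv ℝ f 1 - fderiv ℝ (fderiv ℝ f) 1 (Fᵀ * F - 1)‖
      ≤ K * (3 * M * lam) ^ 2)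
    (hF : ‖F - 1‖ ≤ M * lam) (hFe : ‖Fᵀ * F - 1 - (2 * lam) • e‖ ≤ M * lam ^ 2) :
    |iteratedFDeriv ℝ 2 (fun X => f (Xᵀ * X)) F ![ξ, ξ]
        - iteratedFDeriv ℝ 2 (fun X => f (Xᵀ * X)) 1 ![symPart ξ, symPart ξ]
        - lam * iteratedFDeriv ℝ 2 (fun X => f (Xᵀ * X)) 1 ![e, ξᵀ * ξ]|
      ≤ 22 * (K + 1) * (M + M ^ 2) * (lam * ‖symPart ξ‖ * ‖ξ‖ + lam ^ 2 * ‖ξ‖ ^ 2) := by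
  rw [second_variation_sub_eq hf h₀ lam F he ξ]
  have hu : ‖(2 : ℝ) • symPart ξ‖ = 2 * ‖symPart ξ‖ := by rw [norm_smul]; norm_num
  have h₁ := abs_apply_add_add_sub_le (fderiv ℝ (fderiv ℝ f) (Fᵀ * F))
    (fderiv ℝ (fderiv ℝ f) 1) ((2 : ℝ) • symPart ξ) ((F - 1)ᵀ * ξ + ξᵀ * (F - 1))
  have h₂ := abs_apply_sub_apply_apply_le_of_apply_eq_zero (fderiv ℝ f (Fᵀ * F)) (fderiv ℝ f 1)
    (fderiv ℝ (fderiv ℝ f) 1) (h₀ _ (isSymm_transpose_mul_self ξ)) (Fᵀ * F - 1) ((2 * lam) • e)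
  have hv := (norm_transpose_mul_add_transpose_mul_le (F - 1) ξ).trans
    (by gcongr : 2 * ‖F - 1‖ * ‖ξ‖ ≤ 2 * (M * lam) * ‖ξ‖)
  have hz := norm_transpose_mul_le ξ ξ
  have hs := norm_symPart_le ξ
  calc _ ≤ |fderiv ℝ (fderiv ℝ f) (Fᵀ * F) ((2 : ℝ) • symPart ξ + ((F - 1)ᵀ * ξ + ξᵀ * (F - 1)))
            ((2 : ℝ) • symPart ξ + ((F - 1)ᵀ * ξ + ξᵀ * (F - 1)))
          - fderiv ℝ (fderiv ℝ f) 1 ((2 : ℝ) • symPart ξ) ((2 : ℝ) • symPart ξ)|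
        + 2 * |fderiv ℝ f (Fᵀ * F) (ξᵀ * ξ) - fderiv ℝ (fderiv ℝ f) 1 ((2 * lam) • e) (ξᵀ * ξ)| :=
        (abs_add_le _ _).trans_eq (by rw [abs_mul, abs_two])
    _ ≤ (K * (3 * M * lam) * (2 * ‖symPart ξ‖) ^ 2
          + 2 * K * (2 * ‖symPart ξ‖) * (2 * (M * lam) * ‖ξ‖) + K * (2 * (M * lam) * ‖ξ‖) ^ 2)
        + 2 * ((K * (3 * M * lam) ^ 2 + K * (M * lam ^ 2)) * (‖ξ‖ * ‖ξ‖)) := by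
        gcongr
        · exact h₁.trans (by rw [hu]; gcongr)
        · exact h₂.trans (by gcongr)
    _ ≤ 22 * (K + 1) * (M + M ^ 2) * (lam * ‖symPart ξ‖ * ‖ξ‖ + lam ^ 2 * ‖ξ‖ ^ 2) := by
        have hX : 0 ≤ lam * ‖symPart ξ‖ * ‖ξ‖ := by positivity
        have hY : 0 ≤ lam ^ 2 * ‖ξ‖ ^ 2 := by positivity
        linarith [mul_le_mul_of_nonneg_left hs (by positivity : 0 ≤ K * M * lam * ‖symPart ξ‖),
          mul_nonneg (mul_nonneg hK hM.le) hX, mul_nonneg (mul_nonneg hK (sq_nonneg M)) hX,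
          mul_nonneg hM.le hX, mul_nonneg (sq_nonneg M) hX, mul_nonneg (mul_nonneg hK hM.le) hY,
          mul_nonneg hM.le hY, mul_nonneg (sq_nonneg M) hY]

end MatrixCalculus

theorem second_variation_pointwise_estimate
    (What : Mat3 → ℝ) (hWhat : ContDiff ℝ 3 What)
    (W : Mat3 → ℝ) (hWdef : ∀ F : Mat3, W F = What (Fᵀ * F))
    (hW0 : fderiv ℝ W 1 = 0)
    (L0 : Mat3 →ₗ[ℝ] Mat3)
    (hL0 : ∀ ξ η : Mat3, frob (L0 ξ) η = iteratedFDeriv ℝ 2 W 1 ![ξ, η])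
    (M : ℝ) (hM : 0 < M) :
    ∃ C : ℝ, 0 < C ∧ ∀ lam : ℝ, lam ∈ Set.Ioc (0:ℝ) 1 →
      ∀ F e ξ : Mat3, frobNorm (F - 1) ≤ M * lam →
        eᵀ = e → frobNorm e ≤ M → frobNorm (Fᵀ * F - 1 - (2 * lam) • e) ≤ M * lam ^ 2 →
        |iteratedFDeriv ℝ 2 W F ![ξ, ξ]
            - frob (L0 (symPart ξ)) (symPart ξ)
            - lam * frob (L0 e) (ξᵀ * ξ)|
          ≤ C * (lam * frobNorm (symPart ξ) * frobNorm ξ + lam ^ 2 * frobNorm ξ ^ 2) := by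
  obtain rfl : W = fun F => What (Fᵀ * F) := funext hWdef
  have hsymm := fun u : Mat3 =>
    fderiv_apply_eq_zero_of_isSymm (u := u) (hWhat.differentiable (by norm_num) 1) hW0
  obtain ⟨K, hK, hbound⟩ := exists_second_order_taylor_bounds hWhat (1 : Mat3) (3 * M)
  refine ⟨22 * (K + 1) * (M + M ^ 2), by positivity, ?_⟩
  rintro lam ⟨hlam, hlam1⟩ F e ξ hF he hen hFe
  simp only [frobNorm_eq_norm] at hF hen hFe ⊢
  have hC : ‖Fᵀ * F - 1‖ ≤ 3 * M * lam := by
    have h2e : ‖(2 * lam) • e‖ ≤ 2 * lam * M := by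
      rw [norm_smul, Real.norm_of_nonneg (by positivity)]; gcongr
    calc ‖Fᵀ * F - 1‖ = ‖(Fᵀ * F - 1 - (2 * lam) • e) + (2 * lam) • e‖ := by rw [sub_add_cancel]
      _ ≤ M * lam ^ 2 + 2 * lam * M := (norm_add_le _ _).trans (add_le_add hFe h2e)
      _ ≤ 3 * M * lam := by nlinarith [mul_le_mul_of_nonneg_left hlam1 (mul_pos hM hlam).le]
  obtain ⟨hA, hAA₀, hg⟩ := hbound (Fᵀ * F) (mem_closedBall_iff_norm.mpr (by nlinarith))
  rw [hL0, hL0]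
  exact abs_second_variation_sub_le (hWhat.of_le (by norm_num)) hsymm hK hM hlam he ξ hA
    (hbound 1 (mem_closedBall_self (by positivity))).1 (hAA₀.trans (by gcongr))
    (hg.trans (by gcongr)) hF hFe
end
end

section
/- Let E > 0, ν ∈ (0, 1/2), L > 0. Suppose u⁰, u¹ : ℝ × [0, L] → ℝ³ are smooth and 2π-periodic in the first variable θ, with components written (u_r, u_θ, u_z), and s, t : ℝ → ℝ are 2π-periodic C¹ functions, satisfying for all (θ, z): (1) u¹_θ = u⁰_θ − ∂_θ u⁰_r; (2) u¹_z = −∂_z u⁰_r; (3) ∂_z u⁰_θ + ∂_θ u⁰_z = 2(1+ν)s(θ)/E; (4) u¹_r = −(ν/(1−ν))(u⁰_r + ∂_θ u⁰_θ + ∂_z u⁰_z); (5) u⁰_r + ∂_θ u⁰_θ + (ν/(1−ν))(u¹_r + ∂_z u⁰_z) = 0; (6) ∂_z u⁰_z + (ν/(1−ν))(u¹_r + u⁰_r + ∂_θ u⁰_θ) = ((1+ν)(1−2ν)/(E(1−ν)))(t(θ) − z s'(θ)); together with the boundary conditions u⁰_z(θ,0) = u⁰_θ(θ,0) = u¹_z(θ,0)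 = u¹_θ(θ,0) = 0 for all θ. Then s and t are constant functions, and the field u(r,θ,z) = u⁰(θ,z) + (r−1)u¹(θ,z) satisfies u_r = −(tν/E) r, u_θ = (2(1+ν)s/E) r z, and u_z = (t/E) z. -/
/- STATEMENT 14: Rigidity of the limiting trivial-branch displacement under
   arbitrary load perturbations at z = L: if the first-order displacement
   fields u⁰, u¹ and the 2π-periodic functions s, t satisfy the limiting
   linear elasticity equations (1)–(6) together with the clamping conditions
   at z = 0, then s and t are constants and
   u_r = −(tν/E) r, u_θ = (2(1+ν)s/E) r z, u_z = (t/E) z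
   for u = u⁰ + (r−1)u¹. -/

noncomputable section
open Set

/-- Partial derivative in the angular variable θ. -/
noncomputable def dTh (f : ℝ → ℝ → ℝ) : ℝ → ℝ → ℝ := fun θ z => deriv (fun a => f a z) θ

/-- Partial derivative in the axial variable z. -/
noncomputable def dZax (f : ℝ → ℝ → ℝ) : ℝ → ℝ → ℝ := fun θ z => deriv (f θ) z

section auxPDE
open Function
variable {f : ℝ → ℝ → ℝ}

lemma hasDerivAt_sliceTh (hf : ContDiff ℝ (⊤ : ℕ∞) (uncurry f)) (θ z : ℝ) :
    HasDerivAt (fun a => f a z) (fderiv ℝ (uncurry f) (θ, z) (1, 0)) θ := by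
  have h1 : HasDerivAt (fun a : ℝ => (a, z)) ((1 : ℝ), (0 : ℝ)) θ :=
    (hasDerivAt_id θ).prodMk (hasDerivAt_const θ z)
  exact ((hf.differentiable (by simp) (θ, z)).hasFDerivAt).comp_hasDerivAt θ h1

lemma hasDerivAt_sliceZ (hf : ContDiff ℝ (⊤ : ℕ∞) (uncurry f)) (θ z : ℝ) :
    HasDerivAt (fun b => f θ b) (fderiv ℝ (uncurry f) (θ, z) (0, 1)) z := by
  have h1 : HasDerivAt (fun b : ℝ => (θ, b)) ((0 : ℝ), (1 : ℝ)) z :=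
    (hasDerivAt_const z θ).prodMk (hasDerivAt_id z)
  exact ((hf.differentiable (by simp) (θ, z)).hasFDerivAt).comp_hasDerivAt z h1

lemma dTh_eq' (hf : ContDiff ℝ (⊤ : ℕ∞) (uncurry f)) (θ z : ℝ) :
    dTh f θ z = fderiv ℝ (uncurry f) (θ, z) (1, 0) := (hasDerivAt_sliceTh hf θ z).deriv

lemma dZax_eq' (hf : ContDiff ℝ (⊤ : ℕ∞) (uncurry f)) (θ z : ℝ) :
    dZax f θ z = fderiv ℝ (uncurry f) (θ, z) (0, 1) := (hasDerivAt_sliceZ hf θ z).deriv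

lemma contDiff_dTh (hf : ContDiff ℝ (⊤ : ℕ∞) (uncurry f)) : ContDiff ℝ (⊤ : ℕ∞) (uncurry (dTh f)) := by
  have h : uncurry (dTh f) = fun p : ℝ × ℝ => fderiv ℝ (uncurry f) p ((1 : ℝ), (0 : ℝ)) := by
    funext p
    exact dTh_eq' hf p.1 p.2
  rw [h]
  exact (hf.fderiv_right (by simp)).clm_apply contDiff_const

/-- Schwarz: mixed partials commute for smooth functions. -/
lemma mixed_partials (hf : ContDiff ℝ (⊤ : ℕ∞) (uncurry f)) (θ z : ℝ) :
    dZax (dTh f) θ z = dTh (dZax f) θ z := by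
  set F := uncurry f
  have hF1 : ContDiff ℝ (⊤ : ℕ∞) (fderiv ℝ F) := hf.fderiv_right (by simp)
  have hF2 : HasFDerivAt (fderiv ℝ F) (fderiv ℝ (fderiv ℝ F) (θ, z)) (θ, z) :=
    (hF1.differentiable (by simp) (θ, z)).hasFDerivAt
  have hsymm := second_derivative_symmetric (f := F) (f' := fderiv ℝ F)
    (fun y => (hf.differentiable (by simp) y).hasFDerivAt) hF2
  have hL1 : HasDerivAt (fun b : ℝ => fderiv ℝ F (θ, b))
      (fderiv ℝ (fderiv ℝ F) (θ, z) ((0 : ℝ), (1 : ℝ))) z := by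
    have h1 : HasDerivAt (fun b : ℝ => (θ, b)) ((0 : ℝ), (1 : ℝ)) z :=
      (hasDerivAt_const z θ).prodMk (hasDerivAt_id z)
    exact hF2.comp_hasDerivAt z h1
  have hL : HasDerivAt (fun b : ℝ => dTh f θ b)
      (fderiv ℝ (fderiv ℝ F) (θ, z) ((0 : ℝ), (1 : ℝ)) ((1 : ℝ), (0 : ℝ))) z := by
    have h2 := hL1.clm_apply (hasDerivAt_const z ((1 : ℝ), (0 : ℝ)))
    simp only [map_zero, add_zero] at h2
    have heq : (fun b : ℝ => fderiv ℝ F (θ, b) ((1 : ℝ), (0 : ℝ))) = fun b : ℝ => dTh f θ b := by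
      funext b; exact (dTh_eq' hf θ b).symm
    rwa [heq] at h2
  have hR1 : HasDerivAt (fun a : ℝ => fderiv ℝ F (a, z))
      (fderiv ℝ (fderiv ℝ F) (θ, z) ((1 : ℝ), (0 : ℝ))) θ := by
    have h1 : HasDerivAt (fun a : ℝ => (a, z)) ((1 : ℝ), (0 : ℝ)) θ :=
      (hasDerivAt_id θ).prodMk (hasDerivAt_const θ z)
    exact hF2.comp_hasDerivAt θ h1
  have hR : HasDerivAt (fun a : ℝ => dZax f a z)
      (fderiv ℝ (fderiv ℝ F) (θ, z) ((1 : ℝ), (0 : ℝ)) ((0 : ℝ), (1 : ℝ))) θ := by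
    have h2 := hR1.clm_apply (hasDerivAt_const θ ((0 : ℝ), (1 : ℝ)))
    simp only [map_zero, add_zero] at h2
    have heq : (fun a : ℝ => fderiv ℝ F (a, z) ((0 : ℝ), (1 : ℝ))) = fun a : ℝ => dZax f a z := by
      funext a; exact (dZax_eq' hf a z).symm
    rwa [heq] at h2
  have e1 : dZax (dTh f) θ z
      = fderiv ℝ (fderiv ℝ F) (θ, z) ((0 : ℝ), (1 : ℝ)) ((1 : ℝ), (0 : ℝ)) := hL.deriv
  have e2 : dTh (dZax f) θ z
      = fderiv ℝ (fderiv ℝ F) (θ, z) ((1 : ℝ), (0 : ℝ)) ((0 : ℝ), (1 : ℝ)) := hR.deriv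
  rw [e1, e2, hsymm]

lemma diffZ (hf : ContDiff ℝ (⊤ : ℕ∞) (uncurry f)) (θ : ℝ) : Differentiable ℝ (f θ) :=
  fun z => (hasDerivAt_sliceZ hf θ z).differentiableAt

/-- Uniqueness of derivatives of functions agreeing on `Icc 0 L`. -/
lemma deriv_unique_on_Icc {f g : ℝ → ℝ} {L x a b : ℝ} (hL : 0 < L)
    (hfg : ∀ y ∈ Icc (0 : ℝ) L, f y = g y) (hx : x ∈ Icc (0 : ℝ) L)
    (hf : HasDerivAt f a x) (hg : HasDerivAt g b x) : a = b := by
  have h1 : HasDerivWithinAt g a (Icc (0 : ℝ) L) x :=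
    (hf.hasDerivWithinAt).congr (fun y hy => (hfg y hy).symm) (hfg x hx).symm
  exact (uniqueDiffOn_Icc hL x hx).eq_deriv _ h1 hg.hasDerivWithinAt

/-- FTC-type argument on `[0, L]`. -/
lemma eq_on_Icc_of_deriv_eq {f g : ℝ → ℝ} {L : ℝ}
    (hf : Differentiable ℝ f) (hg : Differentiable ℝ g)
    (hd : ∀ z ∈ Icc (0 : ℝ) L, deriv f z = deriv g z) (h0 : f 0 = g 0) :
    ∀ z ∈ Icc (0 : ℝ) L, f z = g z := by
  refine eq_of_has_deriv_right_eq (f' := fun x => deriv f x)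
    (fun x _ => (hf x).hasDerivAt.hasDerivWithinAt)
    (fun x hx => ?_) hf.continuous.continuousOn hg.continuous.continuousOn h0
  show HasDerivWithinAt g (deriv f x) (Ici x) x
  rw [hd x (Ico_subset_Icc_self hx)]
  exact (hg x).hasDerivAt.hasDerivWithinAt

lemma solve3 {E ν A B R T : ℝ} (hE : E ≠ 0) (h1 : (1:ℝ) - ν ≠ 0) (h2 : (1:ℝ) - 2*ν ≠ 0)
    (h3 : (1:ℝ) + ν ≠ 0)
    (h4 : R = -(ν/(1-ν))*(A+B)) (h5 : A + (ν/(1-ν))*(R+B) = 0)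
    (h6 : B + (ν/(1-ν))*(R+A) = ((1+ν)*(1-2*ν)/(E*(1-ν)))*T) :
    B = T/E ∧ A = -ν*T/E ∧ R = -ν*T/E := by
  have h4' : R*(1-ν) = -(ν*(A+B)) := by
    rw [h4]; field_simp
  have h5' : A*(1-ν) + ν*(R+B) = 0 := by
    field_simp at h5
    linarith
  have h6' : B*(E*(1-ν)) + ν*E*(R+A) = (1+ν)*(1-2*ν)*T := by
    field_simp at h6
    refine mul_right_cancel₀ h1 ?_
    linear_combination (1-ν)*h6
  have hAR : (A - R) * (1 - 2*ν) = 0 := by linear_combination h5' - h4'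
  have hAR' : A = R := by
    rcases mul_eq_zero.1 hAR with h | h
    · linarith
    · exact absurd h h2
  have hA : A = -ν * B := by linear_combination h5' + ν * hAR'
  have hR : R = -ν * B := hAR' ▸ hA
  have hB0 : (B*E - T) * ((1+ν)*(1-2*ν)) = 0 := by
    linear_combination h6' - ν*E*hR - ν*E*hA
  have hB : B = T/E := by
    rcases mul_eq_zero.1 hB0 with h | h
    · rw [eq_div_iff hE]; linarith
    · rcases mul_eq_zero.1 h with h' | h'
      · exact absurd h' h3
      · exact absurd h' h2
  refine ⟨hB, ?_, ?_⟩
  · rw [hA, hB]; ring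
  · rw [hR, hB]; ring

end auxPDE

theorem load_imperfection_stress_rigidity
    (E ν L : ℝ) (hE : 0 < E) (hν : ν ∈ Ioo (0 : ℝ) (1 / 2)) (hL : 0 < L)
    (u0r u0t u0z u1r u1t u1z : ℝ → ℝ → ℝ)
    (hsm : ∀ f ∈ ({u0r, u0t, u0z, u1r, u1t, u1z} : Set (ℝ → ℝ → ℝ)),
      ContDiff ℝ (⊤ : ℕ∞) (Function.uncurry f))
    (hper : ∀ f ∈ ({u0r, u0t, u0z, u1r, u1t, u1z} : Set (ℝ → ℝ → ℝ)),
      ∀ θ z : ℝ, f (θ + 2 * Real.pi) z = f θ z)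
    (s t : ℝ → ℝ) (hs : ContDiff ℝ 1 s) (ht : ContDiff ℝ 1 t)
    (hsper : ∀ θ, s (θ + 2 * Real.pi) = s θ) (htper : ∀ θ, t (θ + 2 * Real.pi) = t θ)
    -- the six limiting linear elasticity equations, for all θ and z ∈ [0, L]
    (heq1 : ∀ θ : ℝ, ∀ z ∈ Icc (0 : ℝ) L, u1t θ z = u0t θ z - dTh u0r θ z)
    (heq2 : ∀ θ : ℝ, ∀ z ∈ Icc (0 : ℝ) L, u1z θ z = -dZax u0r θ z)
    (heq3 : ∀ θ : ℝ, ∀ z ∈ Icc (0 : ℝ) L,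
      dZax u0t θ z + dTh u0z θ z = 2 * (1 + ν) * s θ / E)
    (heq4 : ∀ θ : ℝ, ∀ z ∈ Icc (0 : ℝ) L,
      u1r θ z = -(ν / (1 - ν)) * (u0r θ z + dTh u0t θ z + dZax u0z θ z))
    (heq5 : ∀ θ : ℝ, ∀ z ∈ Icc (0 : ℝ) L,
      u0r θ z + dTh u0t θ z + (ν / (1 - ν)) * (u1r θ z + dZax u0z θ z) = 0)
    (heq6 : ∀ θ : ℝ, ∀ z ∈ Icc (0 : ℝ) L,
      dZax u0z θ z + (ν / (1 - ν)) * (u1r θ z + u0r θ z + dTh u0t θ z)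
        = ((1 + ν) * (1 - 2 * ν) / (E * (1 - ν))) * (t θ - z * deriv s θ))
    -- clamping boundary conditions at z = 0
    (hbc : ∀ θ : ℝ, u0z θ 0 = 0 ∧ u0t θ 0 = 0 ∧ u1z θ 0 = 0 ∧ u1t θ 0 = 0) :
    -- s and t are constant ...
    (∀ θ₁ θ₂ : ℝ, s θ₁ = s θ₂) ∧ (∀ θ₁ θ₂ : ℝ, t θ₁ = t θ₂)
    -- ... and u = u⁰ + (r−1)u¹ has the asserted form
    ∧ (∀ r θ : ℝ, ∀ z ∈ Icc (0 : ℝ) L,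
        u0r θ z + (r - 1) * u1r θ z = -(t 0 * ν / E) * r
        ∧ u0t θ z + (r - 1) * u1t θ z = (2 * (1 + ν) * s 0 / E) * r * z
        ∧ u0z θ z + (r - 1) * u1z θ z = (t 0 / E) * z) := by
  obtain ⟨hν0, hν2⟩ := hν
  have hE' : E ≠ 0 := ne_of_gt hE
  have h1ν : (1:ℝ) - ν ≠ 0 := ne_of_gt (by linarith)
  have h2ν : (1:ℝ) - 2*ν ≠ 0 := ne_of_gt (by linarith)
  have h3ν : (1:ℝ) + ν ≠ 0 := ne_of_gt (by linarith)
  have S0r := hsm u0r (by simp)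
  have S0t := hsm u0t (by simp)
  have S0z := hsm u0z (by simp)
  have hz0 : (0:ℝ) ∈ Icc (0:ℝ) L := ⟨le_refl _, hL.le⟩
  -- the pointwise solution of the algebraic system (4)-(6)
  have key : ∀ θ : ℝ, ∀ z ∈ Icc (0:ℝ) L,
      dZax u0z θ z = (t θ - z * deriv s θ)/E ∧
      u0r θ z + dTh u0t θ z = -ν * (t θ - z * deriv s θ)/E ∧
      u1r θ z = -ν * (t θ - z * deriv s θ)/E := by
    intro θ z hz
    have h6 := heq6 θ z hz
    rw [show u1r θ z + u0r θ z + dTh u0t θ z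
        = u1r θ z + (u0r θ z + dTh u0t θ z) by ring] at h6
    exact solve3 hE' h1ν h2ν h3ν (heq4 θ z hz) (heq5 θ z hz) h6
  -- step 1 : deriv s = 0
  have hs' : ∀ θ, deriv s θ = 0 := by
    intro θ
    have ha : ∀ a : ℝ, dZax u0t a 0 = 2*(1+ν)/E * s a := by
      intro a
      have h3 := heq3 a 0 hz0
      have hz : dTh u0z a 0 = 0 := by
        have he : (fun x => u0z x 0) = fun _ => (0:ℝ) := funext fun x => (hbc x).1
        simp only [dTh, he, deriv_const]
      rw [hz, add_zero] at h3
      rw [h3]; ring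
    have hDa : deriv (fun a => dZax u0t a 0) θ = 2*(1+ν)/E * deriv s θ := by
      have he : (fun a => dZax u0t a 0) = fun a => 2*(1+ν)/E * s a := funext ha
      rw [he, deriv_const_mul _ (hs.differentiable one_ne_zero θ)]
    have hmix : dZax (dTh u0t) θ 0 = 2*(1+ν)/E * deriv s θ := by
      rw [mixed_partials S0t θ 0]
      exact hDa
    have h20 : dZax u0r θ 0 = 0 := by
      have h2 := heq2 θ 0 hz0
      have hb := (hbc θ).2.2.1
      rw [hb] at h2; linarith
    have hq : HasDerivAt (fun z => dTh u0t θ z) (dZax (dTh u0t) θ 0) 0 :=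
      ((hasDerivAt_sliceZ (contDiff_dTh S0t) θ 0).differentiableAt).hasDerivAt
    have hp : HasDerivAt (fun z : ℝ => -ν*(t θ - z*deriv s θ)/E - dTh u0t θ z)
        (ν*deriv s θ/E - dZax (dTh u0t) θ 0) 0 := by
      have h1 : HasDerivAt (fun z : ℝ => -ν*(t θ - z*deriv s θ)/E) (ν*deriv s θ/E) 0 := by
        have he : (fun z : ℝ => -ν*(t θ - z*deriv s θ)/E)
            = fun z => (ν*deriv s θ/E)*z + (-ν*t θ/E) := by funext z; ring
        rw [he]
        simpa using ((hasDerivAt_id (0:ℝ)).const_mul (ν*deriv s θ/E)).add_const (-ν*t θ/E)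
      exact h1.sub hq
    have hfd : HasDerivAt (u0r θ) (dZax u0r θ 0) 0 :=
      ((hasDerivAt_sliceZ S0r θ 0).differentiableAt).hasDerivAt
    have heqd := deriv_unique_on_Icc hL
      (fun y hy => by
        have hA := (key θ y hy).2.1
        linarith) hz0 hfd hp
    rw [h20, hmix] at heqd
    have hlin : (2 + ν) * deriv s θ = 0 := by
      field_simp at heqd
      linarith
    have h2p : (2:ℝ) + ν ≠ 0 := ne_of_gt (by linarith)
    exact (mul_eq_zero.1 hlin).resolve_left h2p
  -- step 2 : deriv t = 0
  have ht' : ∀ θ, deriv t θ = 0 := by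
    intro θ
    have hr0 : ∀ a : ℝ, u0r a 0 = -(ν/E) * t a := by
      intro a
      have hA := (key a 0 hz0).2.1
      have hz : dTh u0t a 0 = 0 := by
        have he : (fun x => u0t x 0) = fun _ => (0:ℝ) := funext fun x => (hbc x).2.1
        simp only [dTh, he, deriv_const]
      rw [hz, add_zero] at hA
      rw [hA]; ring
    have hD : deriv (fun a => u0r a 0) θ = -(ν/E) * deriv t θ := by
      have he : (fun a => u0r a 0) = fun a => -(ν/E) * t a := funext hr0
      rw [he, deriv_const_mul _ (ht.differentiable one_ne_zero θ)]
    have hTh : dTh u0r θ 0 = 0 := by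
      have h1 := heq1 θ 0 hz0
      have hb := hbc θ
      rw [hb.2.2.2, hb.2.1] at h1
      linarith
    have hzero : -(ν/E) * deriv t θ = 0 := by
      rw [← hD]; exact hTh
    rcases mul_eq_zero.1 hzero with h | h
    · exfalso
      have : (0:ℝ) < ν/E := div_pos hν0 hE
      rw [neg_eq_zero] at h
      linarith
    · exact h
  have hscon : ∀ θ₁ θ₂ : ℝ, s θ₁ = s θ₂ :=
    fun θ₁ θ₂ => is_const_of_deriv_eq_zero (hs.differentiable one_ne_zero) hs' θ₁ θ₂
  have htcon : ∀ θ₁ θ₂ : ℝ, t θ₁ = t θ₂ :=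
    fun θ₁ θ₂ => is_const_of_deriv_eq_zero (ht.differentiable one_ne_zero) ht' θ₁ θ₂
  -- u0z formula
  have hu0z : ∀ θ : ℝ, ∀ z ∈ Icc (0:ℝ) L, u0z θ z = t 0/E * z := by
    intro θ
    refine eq_on_Icc_of_deriv_eq (diffZ S0z θ)
      (differentiable_id.const_mul (t 0/E)) ?_ ?_
    · intro z hz
      have hB := (key θ z hz).1
      rw [hs' θ, htcon θ 0] at hB
      have hdg : deriv (fun z : ℝ => t 0/E * z) z = t 0/E := by
        rw [deriv_const_mul _ differentiableAt_fun_id]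
        simp
      rw [hdg]
      show dZax u0z θ z = t 0/E
      rw [hB]; ring
    · simp [(hbc θ).1]
  have hdThz : ∀ θ : ℝ, ∀ z ∈ Icc (0:ℝ) L, dTh u0z θ z = 0 := by
    intro θ z hz
    have he : (fun a => u0z a z) = fun _ => t 0/E * z := funext fun a => hu0z a z hz
    simp only [dTh, he, deriv_const]
  -- u0t formula
  have hu0t : ∀ θ : ℝ, ∀ z ∈ Icc (0:ℝ) L, u0t θ z = 2*(1+ν)*s 0/E * z := by
    intro θ
    refine eq_on_Icc_of_deriv_eq (diffZ S0t θ)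
      (differentiable_id.const_mul (2*(1+ν)*s 0/E)) ?_ ?_
    · intro z hz
      have h3 := heq3 θ z hz
      rw [hdThz θ z hz, hscon θ 0, add_zero] at h3
      have hdg : deriv (fun z : ℝ => 2*(1+ν)*s 0/E * z) z = 2*(1+ν)*s 0/E := by
        rw [deriv_const_mul _ differentiableAt_fun_id]
        simp
      rw [hdg]
      show dZax u0t θ z = 2*(1+ν)*s 0/E
      exact h3
    · simp [(hbc θ).2.1]
  -- u0r formula
  have hu0r : ∀ θ : ℝ, ∀ z ∈ Icc (0:ℝ) L, u0r θ z = -(t 0 * ν / E) := by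
    intro θ z hz
    have hA := (key θ z hz).2.1
    have hdTt : dTh u0t θ z = 0 := by
      have he : (fun a => u0t a z) = fun _ => 2*(1+ν)*s 0/E * z :=
        funext fun a => hu0t a z hz
      simp only [dTh, he, deriv_const]
    rw [hdTt, add_zero, hs' θ, htcon θ 0] at hA
    rw [hA]; ring
  -- u1r formula
  have hu1r : ∀ θ : ℝ, ∀ z ∈ Icc (0:ℝ) L, u1r θ z = -(t 0 * ν / E) := by
    intro θ z hz
    have hR := (key θ z hz).2.2
    rw [hs' θ, htcon θ 0] at hR
    rw [hR]; ring
  -- u1t formula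
  have hu1t : ∀ θ : ℝ, ∀ z ∈ Icc (0:ℝ) L, u1t θ z = 2*(1+ν)*s 0/E * z := by
    intro θ z hz
    have h1 := heq1 θ z hz
    have hdTr : dTh u0r θ z = 0 := by
      have he : (fun a => u0r a z) = fun _ => -(t 0 * ν / E) :=
        funext fun a => hu0r a z hz
      simp only [dTh, he, deriv_const]
    rw [h1, hdTr, hu0t θ z hz]; ring
  -- u1z formula
  have hu1z : ∀ θ : ℝ, ∀ z ∈ Icc (0:ℝ) L, u1z θ z = 0 := by
    intro θ z hz
    have h2 := heq2 θ z hz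
    have hfd : HasDerivAt (u0r θ) (dZax u0r θ z) z :=
      ((hasDerivAt_sliceZ S0r θ z).differentiableAt).hasDerivAt
    have hd0 : dZax u0r θ z = 0 :=
      deriv_unique_on_Icc hL (fun y hy => hu0r θ y hy) hz hfd
        (hasDerivAt_const z (-(t 0 * ν / E)))
    rw [h2, hd0, neg_zero]
  refine ⟨hscon, htcon, ?_⟩
  intro r θ z hz
  refine ⟨?_, ?_, ?_⟩
  · rw [hu0r θ z hz, hu1r θ z hz]; ring
  · rw [hu0t θ z hz, hu1t θ z hz]; ring
  · rw [hu0z θ z hz, hu1z θ z hz]; ring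
end
end
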